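/- Let σ be a sequence of channel actions over Σ, u = rea(σ), v = wri(σ), and x a word. For every k ∈ ℕ, if x/v^k ≠ ε then pr[σ^k](x) = u^k·(x/v^k). -/

import Mathlib

open List
/-- `wpow u k` is the word `u` concatenated `k` times. -/
def wpow {β : Type*} (u : List β) (k : ℕ) : List β := (List.replicate k u).flatten

/-- Auxiliary residual operation, working on reversed words. -/
def resAux {α : Type*} [DecidableEq α] : List α → List α → List α
  | xr, [] => xr
  | [], _ :: _ => []
  | a :: xr, b :: vr => if a = b then resAux xr vr else resAux (a :: xr) vr
termination_by xr vr => vr.length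

/-- The residual `x / v`: the prefix of `x` obtained by removing from `x`
its longest suffix that is a subword of `v`. -/
def res {α : Type*} [DecidableEq α] (x v : List α) : List α :=
  (resAux x.reverse v.reverse).reverse

inductive Act (α : Type*) where
  | write : List α → Act α
  | read : List α → Act α

/-- written part -/
def wri {α : Type*} : List (Act α) → List α
  | [] => []
  | Act.write w :: σ => w ++ wri σ
  | Act.read _ :: σ => wri σ

/-- read part -/
def rea {α : Type*} : List (Act α) → List α
  | [] => []
  | Act.write _ :: σ => rea σ
  | Act.read w :: σ => w ++ rea σ

/-- `pr σ x` : minimal `σ`-predecessor of `x` (processing `σ` right-to-left). -/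
def pr {α : Type*} [DecidableEq α] : List (Act α) → List α → List α
  | [], x => x
  | Act.write v :: σ, x => res (pr σ x) v
  | Act.read u :: σ, x => u ++ pr σ x

/-- lossy step for a single channel action -/
def stepAct {α : Type*} : Act α → List α → List α → Prop
  | Act.write w, x, y => y <+ x ++ w
  | Act.read w, x, y => w ++ y <+ x

/-- lossy steps along a sequence of channel actions -/
def steps {α : Type*} : List (Act α) → List α → List α → Prop
  | [], x, y => x = y
  | θ :: σ, x, y => ∃ z, stepAct θ x z ∧ steps σ z y

/-- `w` is a fractional power of `u` -/
def FracPow {α : Type*} (u w : List α) : Prop := ∃ k : ℕ, w <+: wpow u k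

/-- `x ⊖ u` : remainder of `x` after reading the leftmost embedding of `u`. -/
def ominus {α : Type*} [DecidableEq α] : List α → List α → List α
  | x, [] => x
  | [], _ :: _ => []
  | a :: x, b :: u => if a = b then ominus x u else ominus x (b :: u)

/-- `σ` is increasing -/
def Increasing {α : Type*} (σ : List (Act α)) : Prop :=
  0 < (wri σ).length ∧
    wpow (rea σ) (wri σ).length <+ wpow (wri σ) ((wri σ).length - 1)

/-!
Residuation against a concatenation peels the written words off from the right,
`x/(v₁·v₂) = (x/v₂)/v₁`, and prepending a word commutes with residuation as long as the
residual is non-empty: `(u·y)/v = u·(y/v)` when `y/v ≠ ε`, since then the embedded suffix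
of `y` never reaches into `u`. Induction on `σ` gives `pr[σ](x) = rea(σ)·(x/wri(σ))`
whenever `x/wri(σ) ≠ ε`, and the theorem is the case `σ^k`, because `wri` and `rea`
turn powers of `σ` into powers of words.
-/

section Residual

variable {α : Type*} [DecidableEq α]

lemma resAux_nil_left (vr : List α) : resAux ([] : List α) vr = [] := by
  cases vr <;> simp [resAux]

lemma resAux_append_right (vr₁ vr₂ xr : List α) :
    resAux xr (vr₁ ++ vr₂) = resAux (resAux xr vr₁) vr₂ := by
  induction vr₁ generalizing xr with
  | nil => simp [resAux]
  | cons b vr₁ ih =>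
    cases xr with
    | nil => simp [resAux_nil_left]
    | cons a xr =>
      by_cases hab : a = b
      · simpa [resAux, hab] using ih xr
      · simpa [resAux, hab] using ih (a :: xr)

lemma resAux_append_left (vr xr zr : List α) (h : resAux xr vr ≠ []) :
    resAux (xr ++ zr) vr = resAux xr vr ++ zr := by
  induction vr generalizing xr with
  | nil => simp [resAux]
  | cons b vr ih =>
    cases xr with
    | nil => simp [resAux_nil_left] at h
    | cons a xr =>
      by_cases hab : a = b
      · simp only [cons_append, resAux, hab, if_true] at h ⊢
        exact ih xr h
      · simp only [cons_append, resAux, hab, if_false] at h ⊢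
        exact ih (a :: xr) h

lemma res_nil_right (x : List α) : res x [] = x := by
  simp [res, resAux]

lemma res_nil_left (v : List α) : res ([] : List α) v = [] := by
  simp [res, resAux_nil_left]

lemma res_append_right (x v₁ v₂ : List α) : res x (v₁ ++ v₂) = res (res x v₂) v₁ := by
  simp [res, resAux_append_right]

lemma res_ne_nil_of_res_append_ne_nil {x v₁ v₂ : List α} (h : res x (v₁ ++ v₂) ≠ []) :
    res x v₂ ≠ [] := by
  rintro hx
  rw [res_append_right, hx, res_nil_left] at h
  exact h rfl

lemma res_append_left (u y v : List α) (h : res y v ≠ []) :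
    res (u ++ y) v = u ++ res y v := by
  have h' : resAux y.reverse v.reverse ≠ [] := by
    simpa [res] using h
  simp [res, resAux_append_left _ _ _ h']

end Residual

section Actions

variable {α : Type*}

lemma wpow_succ (u : List α) (k : ℕ) : wpow u (k + 1) = u ++ wpow u k := by
  simp [wpow, List.replicate_succ]

lemma wri_append (σ₁ σ₂ : List (Act α)) : wri (σ₁ ++ σ₂) = wri σ₁ ++ wri σ₂ := by
  induction σ₁ with
  | nil => rfl
  | cons θ σ₁ ih => cases θ <;> simp [wri, ih]

lemma rea_append (σ₁ σ₂ : List (Act α)) : rea (σ₁ ++ σ₂) = rea σ₁ ++ rea σ₂ := by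
  induction σ₁ with
  | nil => rfl
  | cons θ σ₁ ih => cases θ <;> simp [rea, ih]

lemma wri_wpow (σ : List (Act α)) (k : ℕ) : wri (wpow σ k) = wpow (wri σ) k := by
  induction k with
  | zero => rfl
  | succ k ih => rw [wpow_succ, wpow_succ, wri_append, ih]

lemma rea_wpow (σ : List (Act α)) (k : ℕ) : rea (wpow σ k) = wpow (rea σ) k := by
  induction k with
  | zero => rfl
  | succ k ih => rw [wpow_succ, wpow_succ, rea_append, ih]

lemma pr_eq_rea_append_res [DecidableEq α] (σ : List (Act α)) (x : List α)
    (h : res x (wri σ) ≠ []) : pr σ x = rea σ ++ res x (wri σ) := by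
  induction σ with
  | nil => simp [pr, rea, wri, res_nil_right]
  | cons θ σ ih =>
    cases θ with
    | write v =>
      rw [wri] at h
      rw [pr, ih (res_ne_nil_of_res_append_ne_nil h), rea, wri, res_append_right,
        res_append_left]
      rwa [← res_append_right]
    | read u =>
      rw [wri] at h
      simp [pr, rea, wri, ih h]

end Actions

/-- if `x/v^k ≠ ε` (where `v = wri(σ)`) then
`pr[σ^k](x) = u^k·(x/v^k)` (where `u = rea(σ)`). -/
theorem pr_iterate_residual {α : Type*} [DecidableEq α]
    (σ : List (Act α)) (x : List α) (k : ℕ)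
    (h : res x (wpow (wri σ) k) ≠ []) :
    pr (wpow σ k) x = wpow (rea σ) k ++ res x (wpow (wri σ) k) := by
  rw [← wri_wpow] at h ⊢
  rw [← rea_wpow]
  exact pr_eq_rea_append_res _ x h
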